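/- Let N_1 < N_2 be integers and suppose E ⊂ [N_1, N_2] is an almost phaseless sampling set for V_m|_{[N_1,N_2]}. Then #E ≥ N_2 − N_1 + m + 1. -/

import Mathlib

open MeasureTheory

/-- The degree-`m` B-spline: `(m+1)`-fold convolution of the indicator of `[0,1]`. -/
noncomputable def bspline : ℕ → ℝ → ℝ
  | 0 => Set.indicator (Set.Icc (0 : ℝ) 1) (fun _ => 1)
  | m + 1 => fun x => ∫ t in (0 : ℝ)..1, bspline m (x - t)

/-- The spline `Σ_{n=N₁-m}^{N₂-1} cₙ φ_m(x-n)`, with coefficients indexed by the basis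
index set of `V_m|_{[N₁,N₂]}`. -/
noncomputable def splineFun (m : ℕ) (N₁ N₂ : ℤ) (c : ℤ → ℝ) (x : ℝ) : ℝ :=
  ∑ n ∈ Finset.Icc (N₁ - m) (N₂ - 1), c n * bspline m (x - n)

/-- `E` is an almost phaseless sampling set for `V_m|_{[N₁,N₂]}`: all functions with
coefficient vector outside a finite union of proper subspaces of the coefficient space
are determined up to a sign on `[N₁,N₂]` by their unsigned samples on `E`. -/
def IsAlmostPhaselessSamplingSet (m : ℕ) (N₁ N₂ : ℤ) (E : Finset ℝ) : Prop :=
  ∃ S : Finset (Submodule ℝ ({n // n ∈ Finset.Icc (N₁ - (m : ℤ)) (N₂ - 1)} → ℝ)),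
    (∀ W ∈ S, W ≠ ⊤) ∧
    ∀ c : ℤ → ℝ,
      (∀ W ∈ S, (fun n : {n // n ∈ Finset.Icc (N₁ - (m : ℤ)) (N₂ - 1)} => c n) ∉ W) →
      ∀ c' : ℤ → ℝ,
        (∀ x ∈ E, |splineFun m N₁ N₂ c x| = |splineFun m N₁ N₂ c' x|) →
        (∀ x ∈ Set.Icc (N₁ : ℝ) N₂, splineFun m N₁ N₂ c' x = splineFun m N₁ N₂ c x) ∨
        (∀ x ∈ Set.Icc (N₁ : ℝ) N₂, splineFun m N₁ N₂ c' x = -splineFun m N₁ N₂ c x)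

/-! If `#E ≤ N₂ - N₁ + m`, the sample functionals `v ↦ f_v(x)`, `x ∈ E`, on the coefficient
space `V` (of dimension `N₂ - N₁ + m ≥ 2`) are too few for almost phase retrieval. If they have a
common nonzero kernel vector `d`, then `v` and `v + d` have the same samples. Otherwise fix
`x₀ ∈ E`: the functionals at the other points have a common kernel vector `d` with `f_d(x₀) ≠ 0`,
and the reflection along `d` with mirror `{f(x₀) = 0}` flips the sign of the sample at `x₀` only.
Either way a generic `v` has a partner `w ≠ ±v` with the same unsigned samples, and `f_w ≠ ±f_v`
on `[N₁, N₂]` because the B-splines are linearly independent there. The independence follows by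
induction on `m` from `φ_{m+1}' = φ_m - φ_m(· - 1)`: differentiating a vanishing spline of degree
`m + 1` gives a vanishing spline of degree `m` with coefficients `c n - c (n - 1)`. -/

open Set Module

theorem Submodule.exists_forall_notMem_of_ne_top {k E : Type*} [DivisionRing k] [Infinite k]
    [AddCommGroup E] [Module k E] (S : Finset (Submodule k E)) (hS : ∀ p ∈ S, p ≠ ⊤) :
    ∃ v, ∀ p ∈ S, v ∉ p := by
  by_contra! h
  refine hS ⊤ (Subspace.top_mem_of_biUnion_eq_univ ?_) rfl
  exact Set.eq_univ_of_forall fun v => by simpa using h v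

section PhaseRetrieval

variable {ι V : Type*} [AddCommGroup V] [Module ℝ V]

def IsAlmostPhaseRetrievable (ℓ : ι → Dual ℝ V) : Prop :=
  ∃ S : Finset (Submodule ℝ V), (∀ W ∈ S, W ≠ ⊤) ∧
    ∀ v, (∀ W ∈ S, v ∉ W) → ∀ w, (∀ i, |ℓ i v| = |ℓ i w|) → w = v ∨ w = -v

theorem not_isAlmostPhaseRetrievable_of_forall {ℓ : ι → Dual ℝ V} (S₀ : Finset (Submodule ℝ V))
    (hS₀ : ∀ W ∈ S₀, W ≠ ⊤)
    (h : ∀ v, (∀ W ∈ S₀, v ∉ W) → ∃ w, (∀ i, |ℓ i v| = |ℓ i w|) ∧ w ≠ v ∧ w ≠ -v) :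
    ¬ IsAlmostPhaseRetrievable ℓ := by
  rintro ⟨S, hS, hret⟩
  obtain ⟨v, hv⟩ := Submodule.exists_forall_notMem_of_ne_top (S ∪ S₀) (by
    simp only [Finset.mem_union]; rintro W (hW | hW) <;> [exact hS W hW; exact hS₀ W hW])
  obtain ⟨w, hw, hwv, hwv'⟩ := h v fun W hW => hv W (Finset.mem_union_right _ hW)
  rcases hret v (fun W hW => hv W (Finset.mem_union_left _ hW)) w hw with h | h
  · exact hwv h
  · exact hwv' h

theorem span_singleton_ne_top_of_two_le_finrank (hV : 2 ≤ finrank ℝ V) (d : V) :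
    ℝ ∙ d ≠ ⊤ := by
  intro h
  have := finrank_span_le_card (R := ℝ) ({d} : Set V)
  rw [h, finrank_top] at this
  simp only [Set.toFinset_singleton, Finset.card_singleton] at this
  omega

theorem not_isAlmostPhaseRetrievable_of_forall_eq_zero {ℓ : ι → Dual ℝ V}
    (hV : 2 ≤ finrank ℝ V) {d : V} (hd : d ≠ 0) (hℓd : ∀ i, ℓ i d = 0) :
    ¬ IsAlmostPhaseRetrievable ℓ := by
  refine not_isAlmostPhaseRetrievable_of_forall {ℝ ∙ d}
    (by simpa using span_singleton_ne_top_of_two_le_finrank hV d)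
    fun v hv => ⟨v + d, fun i => by simp [hℓd], by simpa using hd, fun h => ?_⟩
  refine hv _ (Finset.mem_singleton_self _) (Submodule.mem_span_singleton.2 ⟨-2⁻¹, ?_⟩)
  rw [← sub_eq_zero] at h ⊢
  rw [show v + d - -v = (-2 : ℝ) • ((-2⁻¹ : ℝ) • d - v) by module] at h
  simpa using h

/-- The reflection `v ↦ v - (2 ℓ i₀ v / ℓ i₀ d) • d` flips the sign of the `i₀`-th sample and
keeps the others. -/
theorem not_isAlmostPhaseRetrievable_of_forall_ne_eq_zero {ℓ : ι → Dual ℝ V}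
    (hV : 2 ≤ finrank ℝ V) {i₀ : ι} {d : V} (hd : ℓ i₀ d ≠ 0) (hℓd : ∀ i ≠ i₀, ℓ i d = 0) :
    ¬ IsAlmostPhaseRetrievable ℓ := by
  have hf : ((2 / ℓ i₀ d) • ℓ i₀) d = 2 := by simp [hd]
  refine not_isAlmostPhaseRetrievable_of_forall {ℝ ∙ d, LinearMap.ker (ℓ i₀)} ?_ fun v hv =>
    ⟨reflection hf v, fun i => ?_, fun h => ?_, fun h => ?_⟩
  · simp only [Finset.mem_insert, Finset.mem_singleton]
    rintro W (rfl | rfl)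
    · exact span_singleton_ne_top_of_two_le_finrank hV d
    · exact fun h => hd (LinearMap.ker_eq_top.1 h ▸ rfl)
  · rw [reflection_apply]
    obtain rfl | hi := eq_or_ne i i₀
    · rw [map_sub, map_smul, LinearMap.smul_apply, smul_eq_mul, smul_eq_mul,
        show ℓ i v - 2 / ℓ i d * ℓ i v * ℓ i d = -ℓ i v by field_simp; ring, abs_neg]
    · simp [hℓd i hi]
  · refine hv (LinearMap.ker (ℓ i₀)) (by simp) ?_
    rw [reflection_apply, sub_eq_self, smul_eq_zero] at h
    simpa [hd] using h.resolve_right fun h0 => hd (by simp [h0])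
  · refine hv (ℝ ∙ d) (by simp) (Submodule.mem_span_singleton.2 ⟨(ℓ i₀ v / ℓ i₀ d), ?_⟩)
    rw [reflection_apply, LinearMap.smul_apply, smul_eq_mul] at h
    linear_combination (norm := module) (-2⁻¹ : ℝ) • h

theorem not_isAlmostPhaseRetrievable [Fintype ι] [FiniteDimensional ℝ V] (ℓ : ι → Dual ℝ V)
    (hV : 2 ≤ finrank ℝ V) (hι : Fintype.card ι ≤ finrank ℝ V) :
    ¬ IsAlmostPhaseRetrievable ℓ := by
  by_cases hker : ∃ d ≠ 0, ∀ i, ℓ i d = 0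
  · obtain ⟨d, hd, hℓd⟩ := hker
    exact not_isAlmostPhaseRetrievable_of_forall_eq_zero hV hd hℓd
  push Not at hker
  classical
  have : Nontrivial V := Module.nontrivial_of_finrank_pos (R := ℝ) (by omega)
  obtain ⟨d₀, hd₀⟩ := exists_ne (0 : V)
  obtain ⟨i₀, -⟩ := hker d₀ hd₀
  have hker' : LinearMap.ker (LinearMap.pi fun i : {i // i ≠ i₀} => ℓ i) ≠ ⊥ := by
    refine LinearMap.ker_ne_bot_of_finrank_lt ?_
    rw [finrank_fintype_fun_eq_card, Fintype.card_subtype_compl, Fintype.card_subtype_eq]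
    omega
  obtain ⟨d, hd, hd0⟩ := Submodule.ne_bot_iff _ |>.1 hker'
  have hℓd : ∀ i ≠ i₀, ℓ i d = 0 := fun i hi => congr_fun (LinearMap.mem_ker.1 hd) ⟨i, hi⟩
  obtain ⟨i, hi⟩ := hker d hd0
  obtain rfl : i = i₀ := by_contra fun h => hi (hℓd i h)
  exact not_isAlmostPhaseRetrievable_of_forall_ne_eq_zero hV hi hℓd

end PhaseRetrieval

section IntegralSubOne

variable {f : ℝ → ℝ}

theorem intervalIntegral_sub_one_eq_sub (hf : LocallyIntegrable f) (x : ℝ) :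
    ∫ s in (x - 1)..x, f s = (∫ s in (0 : ℝ)..x, f s) - ∫ s in (0 : ℝ)..(x - 1), f s :=
  (intervalIntegral.integral_interval_sub_left
    ((hf.integrableOn_isCompact isCompact_uIcc).intervalIntegrable)
    ((hf.integrableOn_isCompact isCompact_uIcc).intervalIntegrable)).symm

theorem continuous_intervalIntegral_sub_one (hf : LocallyIntegrable f) :
    Continuous fun x => ∫ s in (x - 1)..x, f s := by
  have hF := intervalIntegral.continuous_primitive
    (fun a b => (hf.integrableOn_isCompact isCompact_uIcc).intervalIntegrable) 0
  simp only [intervalIntegral_sub_one_eq_sub hf]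
  exact hF.sub (hF.comp (continuous_sub_right 1))

theorem hasDerivAt_intervalIntegral_sub_one (hf : LocallyIntegrable f) {x : ℝ}
    (hx : ContinuousAt f x) (hx₁ : ContinuousAt f (x - 1)) :
    HasDerivAt (fun y => ∫ s in (y - 1)..y, f s) (f x - f (x - 1)) x := by
  have hF : ∀ y, ContinuousAt f y →
      HasDerivAt (fun u => ∫ s in (0 : ℝ)..u, f s) (f y) y := fun y hy =>
    intervalIntegral.integral_hasDerivAt_right
      ((hf.integrableOn_isCompact isCompact_uIcc).intervalIntegrable)
      hf.aestronglyMeasurable.stronglyMeasurableAtFilter hy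
  simp only [intervalIntegral_sub_one_eq_sub hf]
  exact (hF x hx).sub ((hF (x - 1) hx₁).comp_sub_const x 1)

end IntegralSubOne

theorem bspline_zero : bspline 0 = indicator (Icc 0 1) 1 := rfl

theorem bspline_succ (m : ℕ) : bspline (m + 1) = fun x => ∫ s in (x - 1)..x, bspline m s := by
  funext x
  show (∫ t in (0 : ℝ)..1, bspline m (x - t)) = _
  rw [intervalIntegral.integral_comp_sub_left (bspline m) x]
  norm_num

theorem bspline_nonneg (m : ℕ) (x : ℝ) : 0 ≤ bspline m x := by
  induction m generalizing x with
  | zero => exact indicator_nonneg (fun _ _ => zero_le_one) x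
  | succ m ih =>
    rw [bspline_succ]
    exact intervalIntegral.integral_nonneg (by linarith) fun s _ => ih s

theorem bspline_eq_zero_of_lt_or_lt (m : ℕ) {x : ℝ} (hx : x < 0 ∨ m + 1 < x) :
    bspline m x = 0 := by
  induction m generalizing x with
  | zero =>
    refine indicator_of_notMem (fun h => ?_) _
    rcases hx with hx | hx <;> [linarith [h.1]; (push_cast at hx; linarith [h.2])]
  | succ m ih =>
    rw [bspline_succ]
    refine (intervalIntegral.integral_congr (g := 0) fun s hs => ih ?_).trans (by simp)
    rw [uIcc_of_le (by linarith)] at hs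
    push_cast at hx
    rcases hx with hx | hx <;> [left; right] <;> linarith [hs.1, hs.2]

theorem locallyIntegrable_bspline (m : ℕ) : LocallyIntegrable (bspline m) := by
  induction m with
  | zero => exact (locallyIntegrable_const 1).indicator measurableSet_Icc
  | succ m ih => exact (bspline_succ m ▸ continuous_intervalIntegral_sub_one ih).locallyIntegrable

theorem continuous_bspline_succ (m : ℕ) : Continuous (bspline (m + 1)) :=
  bspline_succ m ▸ continuous_intervalIntegral_sub_one (locallyIntegrable_bspline m)

theorem continuousAt_bspline (m : ℕ) {x : ℝ} (hx : x ∉ range ((↑) : ℤ → ℝ)) :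
    ContinuousAt (bspline m) x := by
  cases m with
  | zero =>
    refine continuousOn_const.continuousAt_indicator ?_
    rw [frontier_Icc zero_le_one]
    rintro (rfl | rfl)
    exacts [hx ⟨0, Int.cast_zero⟩, hx ⟨1, Int.cast_one⟩]
  | succ m => exact (continuous_bspline_succ m).continuousAt

theorem hasDerivAt_bspline_succ (m : ℕ) {x : ℝ} (hx : x ∉ range ((↑) : ℤ → ℝ)) :
    HasDerivAt (bspline (m + 1)) (bspline m x - bspline m (x - 1)) x := by
  have hx₁ : x - 1 ∉ range ((↑) : ℤ → ℝ) := fun ⟨k, hk⟩ => hx ⟨k + 1, by push_cast; linarith⟩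
  rw [bspline_succ]
  exact hasDerivAt_intervalIntegral_sub_one (locallyIntegrable_bspline m)
    (continuousAt_bspline m hx) (continuousAt_bspline m hx₁)

theorem bspline_eq_pow_div_factorial (m : ℕ) {x : ℝ} (hx : x ∈ Icc 0 1) :
    bspline m x = x ^ m / m.factorial := by
  induction m generalizing x with
  | zero => simp [bspline_zero, indicator_of_mem hx]
  | succ m ih =>
    have hint := fun a b => ((locallyIntegrable_bspline m).integrableOn_isCompact
      (isCompact_uIcc (a := a) (b := b))).intervalIntegrable
    have hneg : ∫ s in (x - 1)..0, bspline m s = 0 := by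
      rw [intervalIntegral.integral_of_le (by linarith [hx.2]), integral_Ioc_eq_integral_Ioo]
      exact setIntegral_eq_zero_of_forall_eq_zero fun s hs =>
        bspline_eq_zero_of_lt_or_lt m (Or.inl hs.2)
    have hpos : ∫ s in (0 : ℝ)..x, bspline m s = ∫ s in (0 : ℝ)..x, s ^ m / m.factorial :=
      intervalIntegral.integral_congr fun s hs => by
        rw [uIcc_of_le hx.1] at hs
        exact ih ⟨hs.1, hs.2.trans hx.2⟩
    simp only [bspline_succ]
    rw [← intervalIntegral.integral_add_adjacent_intervals (hint _ _) (hint _ _),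
      hneg, hpos, zero_add, intervalIntegral.integral_div, integral_pow, Nat.factorial_succ]
    push_cast
    field_simp
    ring

section Spline

variable (m : ℕ) (N₁ N₂ : ℤ)

theorem splineFun_sub (c c' : ℤ → ℝ) :
    splineFun m N₁ N₂ (c - c') = splineFun m N₁ N₂ c - splineFun m N₁ N₂ c' := by
  funext x
  simp [splineFun, sub_mul, Finset.sum_sub_distrib]

theorem splineFun_neg (c : ℤ → ℝ) : splineFun m N₁ N₂ (-c) = -splineFun m N₁ N₂ c := by
  funext x
  simp [splineFun, neg_mul, Finset.sum_neg_distrib]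

variable {m N₁ N₂}

theorem bspline_sub_intCast_eq_zero {x : ℝ} (hx : x ∈ Ioo (N₁ : ℝ) N₂) {n : ℤ}
    (hn : n ∉ Finset.Icc (N₁ - m) (N₂ - 1)) : bspline m (x - n) = 0 := by
  refine bspline_eq_zero_of_lt_or_lt m ?_
  rw [Finset.mem_Icc, not_and_or, not_le, not_le] at hn
  rcases hn with hn | hn
  · have : (n : ℝ) + m + 1 ≤ N₁ := by exact_mod_cast (by omega : n + m + 1 ≤ N₁)
    right; linarith [hx.1]
  · have : (N₂ : ℝ) ≤ n := by exact_mod_cast (by omega : N₂ ≤ n)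
    left; linarith [hx.2]

theorem sum_mul_bspline_eq_splineFun (c : ℤ → ℝ) {s : Finset ℤ}
    (hs : Finset.Icc (N₁ - m) (N₂ - 1) ⊆ s) {x : ℝ} (hx : x ∈ Ioo (N₁ : ℝ) N₂) :
    ∑ n ∈ s, c n * bspline m (x - n) = splineFun m N₁ N₂ c x :=
  (Finset.sum_subset hs fun n _ hn => by rw [bspline_sub_intCast_eq_zero hx hn, mul_zero]).symm

theorem hasDerivAt_splineFun_succ (c : ℤ → ℝ) {x : ℝ} (hx : x ∈ Ioo (N₁ : ℝ) N₂)
    (hxZ : x ∉ range ((↑) : ℤ → ℝ)) :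
    HasDerivAt (splineFun (m + 1) N₁ N₂ c)
      (splineFun m N₁ N₂ (fun n => c n - c (n - 1)) x) x := by
  set J := Finset.Icc (N₁ - (m + 1 : ℕ)) (N₂ - 1)
  have hderiv : HasDerivAt (splineFun (m + 1) N₁ N₂ c)
      (∑ n ∈ J, c n * (bspline m (x - n) - bspline m (x - n - 1))) x := by
    refine HasDerivAt.fun_sum fun n _ => HasDerivAt.const_mul (c n) ?_
    exact (hasDerivAt_bspline_succ m fun ⟨k, hk⟩ => hxZ ⟨k + n, by push_cast; linarith⟩)
      |>.comp_sub_const x n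
  convert hderiv using 1
  have hshift :
      ∑ n ∈ J, c n * bspline m (x - n - 1) = splineFun m N₁ N₂ (fun n => c (n - 1)) x := by
    rw [← sum_mul_bspline_eq_splineFun _ (s := J.map (addRightEmbedding 1)) _ hx, Finset.sum_map]
    · simp [sub_sub]
    · rw [Finset.map_add_right_Icc]; exact Finset.Icc_subset_Icc (by omega) (by omega)
  change splineFun m N₁ N₂ (c - fun n => c (n - 1)) x = _
  rw [splineFun_sub, Pi.sub_apply, ← hshift, ← sum_mul_bspline_eq_splineFun c (s := J)
    (Finset.Icc_subset_Icc (by push_cast; omega) le_rfl) hx, ← Finset.sum_sub_distrib]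
  simp only [mul_sub]

theorem intCast_add_half_notMem_range (n : ℤ) : (n : ℝ) + 1 / 2 ∉ range ((↑) : ℤ → ℝ) := by
  rintro ⟨k, hk⟩
  have : ((2 * k : ℤ) : ℝ) = (2 * n + 1 : ℤ) := by push_cast; linarith
  have := Int.cast_injective this
  omega

theorem Int.eq_of_forall_mem_Icc_eq_sub_one {α : Type*} {f : ℤ → α} {a b : ℤ}
    (h : ∀ n ∈ Finset.Icc (a + 1) b, f n = f (n - 1)) : ∀ n ∈ Finset.Icc a b, f n = f a := by
  intro n hn
  obtain ⟨han, hnb⟩ := Finset.mem_Icc.1 hn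
  clear hn
  induction n, han using Int.leInduction with
  | base => rfl
  | succ n han ih =>
    rw [h (n + 1) (Finset.mem_Icc.2 ⟨by omega, hnb⟩), add_sub_cancel_right, ih (by omega)]

theorem splineFun_zero_intCast_add_half (c : ℤ → ℝ) {n : ℤ} (hn : n ∈ Finset.Icc N₁ (N₂ - 1)) :
    splineFun 0 N₁ N₂ c (n + 1 / 2) = c n := by
  rw [splineFun, Nat.cast_zero, sub_zero, Finset.sum_eq_single_of_mem n hn]
  · rw [add_sub_cancel_left, bspline_eq_pow_div_factorial 0 ⟨by norm_num, by norm_num⟩]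
    simp
  · intro k _ hkn
    refine mul_eq_zero_of_right _ (bspline_eq_zero_of_lt_or_lt 0 ?_)
    rcases lt_or_gt_of_ne hkn with h | h
    · have : (k : ℝ) + 1 ≤ n := by exact_mod_cast h
      right; push_cast; linarith
    · have : (n : ℝ) + 1 ≤ k := by exact_mod_cast h
      left; linarith

theorem eq_zero_of_splineFun_const_eq_zero (hN : N₁ < N₂) {c : ℤ → ℝ} {t : ℝ}
    (hc : ∀ n ∈ Finset.Icc (N₁ - m) (N₂ - 1), c n = t)
    (h : splineFun m N₁ N₂ c (N₁ + 1 / 2) = 0) : t = 0 := by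
  rw [splineFun, Finset.sum_congr rfl fun n hn => by rw [hc n hn], ← Finset.mul_sum] at h
  refine (mul_eq_zero.1 h).resolve_right (ne_of_gt ?_)
  refine lt_of_lt_of_le ?_ (Finset.single_le_sum (f := fun n : ℤ => bspline m (N₁ + 1 / 2 - n))
    (fun n _ => bspline_nonneg m _) (Finset.mem_Icc.2 ⟨by omega, by omega⟩ : N₁ ∈ _))
  rw [add_sub_cancel_left, bspline_eq_pow_div_factorial m ⟨by norm_num, by norm_num⟩]
  positivity

/-- Vanishing is only assumed off the integers, where the derivative formula
`hasDerivAt_splineFun_succ` holds, so that the hypothesis passes from degree `m + 1` to `m`. -/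
theorem coeff_eq_zero_of_splineFun_eq_zero (hN : N₁ < N₂) (c : ℤ → ℝ)
    (h : ∀ x ∈ Ioo (N₁ : ℝ) N₂, x ∉ range ((↑) : ℤ → ℝ) → splineFun m N₁ N₂ c x = 0) :
    ∀ n ∈ Finset.Icc (N₁ - m) (N₂ - 1), c n = 0 := by
  induction m generalizing c with
  | zero =>
    intro n hn
    rw [Nat.cast_zero, sub_zero] at hn
    obtain ⟨h₁, h₂⟩ := Finset.mem_Icc.1 hn
    have h₁' : (N₁ : ℝ) ≤ n := by exact_mod_cast h₁
    have h₂' : (n : ℝ) + 1 ≤ N₂ := by exact_mod_cast (by omega : n + 1 ≤ N₂)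
    rw [← splineFun_zero_intCast_add_half c hn]
    exact h _ ⟨by linarith, by linarith⟩ (intCast_add_half_notMem_range n)
  | succ m ih =>
    have hdiff := ih (fun n => c n - c (n - 1)) fun x hx hxZ => by
      have hU : ∀ᶠ y in nhds x, splineFun (m + 1) N₁ N₂ c y = 0 :=
        Filter.eventually_of_mem ((isOpen_Ioo.inter Real.isOpen_compl_range_intCast).mem_nhds
          ⟨hx, hxZ⟩) fun y hy => h y hy.1 hy.2
      exact (hasDerivAt_splineFun_succ c hx hxZ).unique
        ((hasDerivAt_const x 0).congr_of_eventuallyEq hU)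
    have hconst := Int.eq_of_forall_mem_Icc_eq_sub_one (f := c) (a := N₁ - (m + 1 : ℕ))
      (b := N₂ - 1) fun n hn =>
        sub_eq_zero.1 (hdiff n (by push_cast at hn ⊢; convert hn using 2; ring))
    have hN' : (N₁ : ℝ) + 1 ≤ N₂ := by exact_mod_cast hN
    have ht := eq_zero_of_splineFun_const_eq_zero hN hconst
      (h _ ⟨by linarith, by linarith⟩ (intCast_add_half_notMem_range N₁))
    intro n hn
    rw [hconst n hn, ht]

theorem coeff_eq_of_splineFun_eqOn (hN : N₁ < N₂) {c c' : ℤ → ℝ}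
    (h : ∀ x ∈ Icc (N₁ : ℝ) N₂, splineFun m N₁ N₂ c x = splineFun m N₁ N₂ c' x) :
    ∀ n ∈ Finset.Icc (N₁ - m) (N₂ - 1), c n = c' n := fun n hn =>
  sub_eq_zero.1 <| coeff_eq_zero_of_splineFun_eq_zero hN (c - c') (fun x hx _ => by
    rw [splineFun_sub, Pi.sub_apply, h x (Ioo_subset_Icc_self hx), sub_self]) n hn

variable (m N₁ N₂) in
noncomputable def splineSample (x : ℝ) : Module.Dual ℝ (Finset.Icc (N₁ - m) (N₂ - 1) → ℝ) where
  toFun v := ∑ n, v n * bspline m (x - n)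
  map_add' v w := by simp [add_mul, Finset.sum_add_distrib]
  map_smul' a v := by simp [Finset.mul_sum, mul_assoc]

theorem splineSample_apply_restrict (x : ℝ) (c : ℤ → ℝ) :
    splineSample m N₁ N₂ x (fun n => c n) = splineFun m N₁ N₂ c x :=
  Finset.sum_coe_sort (Finset.Icc (N₁ - m) (N₂ - 1)) fun n => c n * bspline m (x - n)

end Spline

theorem IsAlmostPhaselessSamplingSet.isAlmostPhaseRetrievable {m : ℕ} {N₁ N₂ : ℤ}
    (hN : N₁ < N₂) {E : Finset ℝ} (hE : IsAlmostPhaselessSamplingSet m N₁ N₂ E) :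
    IsAlmostPhaseRetrievable fun x : E => splineSample m N₁ N₂ x := by
  obtain ⟨S, hS, hdet⟩ := hE
  refine ⟨S, hS, fun v hv w hw => ?_⟩
  let ext (u : Finset.Icc (N₁ - m) (N₂ - 1) → ℝ) : ℤ → ℝ := Function.extend Subtype.val u 0
  have hext (u) (n : Finset.Icc (N₁ - m) (N₂ - 1)) : ext u n = u n :=
    Subtype.val_injective.extend_apply u 0 n
  have hsample (u) (x : ℝ) : splineSample m N₁ N₂ x u = splineFun m N₁ N₂ (ext u) x := by
    rw [← splineSample_apply_restrict]
    simp only [hext]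
  rcases hdet (ext v) (by simpa only [hext] using hv) (ext w)
    (fun x hx => by simpa only [hsample] using hw ⟨x, hx⟩) with h | h
  · exact .inl <| funext fun n => by
      simpa only [hext] using coeff_eq_of_splineFun_eqOn hN h n n.2
  · refine .inr <| funext fun n => ?_
    have h' : ∀ x ∈ Icc (N₁ : ℝ) N₂,
        splineFun m N₁ N₂ (ext w) x = splineFun m N₁ N₂ (-ext v) x := fun x hx => by
      rw [splineFun_neg]
      exact h x hx
    simpa only [hext, Pi.neg_apply] using coeff_eq_of_splineFun_eqOn hN h' n n.2

theorem stmt_11_general (m : ℕ) (hm : 1 ≤ m) (N₁ N₂ : ℤ) (hN : N₁ < N₂) (E : Finset ℝ)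
    (hAPS : IsAlmostPhaselessSamplingSet m N₁ N₂ E) :
    N₂ - N₁ + m + 1 ≤ (E.card : ℤ) := by
  by_contra! hE
  have hdim : finrank ℝ (Finset.Icc (N₁ - m) (N₂ - 1) → ℝ) = (N₂ - N₁ + m).toNat := by
    rw [finrank_fintype_fun_eq_card, Fintype.card_coe, Int.card_Icc]
    congr 1
    ring
  refine not_isAlmostPhaseRetrievable _ ?_ ?_ (hAPS.isAlmostPhaseRetrievable hN)
  · omega
  · rw [Fintype.card_coe]
    omega

/-- an almost phaseless sampling set has at least `N₂ - N₁ + m + 1` points. -/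
theorem stmt_11 (m : ℕ) (hm : 1 ≤ m) (N₁ N₂ : ℤ) (hN : N₁ < N₂) (E : Finset ℝ)
    (hE : (E : Set ℝ) ⊆ Set.Icc (N₁ : ℝ) N₂)
    (hAPS : IsAlmostPhaselessSamplingSet m N₁ N₂ E) :
    N₂ - N₁ + m + 1 ≤ (E.card : ℤ) :=
  stmt_11_general m hm N₁ N₂ hN E hAPS
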